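/- arXiv:0707.3170 — 2 statements merged into one kernel-verified Lean document; each statement's English description precedes it below -/
import Mathlib

section
/- In an ω-algebraic dcpo, bounded completeness is equivalent to finite bounded completeness: any two upper-bounded elements have a least upper bound if and only if any two upper-bounded compact elements have a least upper bound. -/
/-!
The compact approximants of `x` and of `y` form directed sets with lubs `x` and `y`. When `x` and
`y` are bounded, every pair of such approximants is bounded and so, by finite bounded completeness,
has a join. These joins form a directed set, whose lub in the dcpo is the join of `x` and `y`.
-/

/-- `a` is a compact (finite) element: whenever `a` is below the lub of a directed set,
it is below some member of the set. -/
def IsCompactElt {D : Type*} [PartialOrder D] (a : D) : Prop :=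
  ∀ (X : Set D) (l : D), X.Nonempty → DirectedOn (· ≤ ·) X → IsLUB X l → a ≤ l →
    ∃ x ∈ X, a ≤ x

lemma bot_isCompactElt {D : Type*} [PartialOrder D] [OrderBot D] : IsCompactElt (⊥ : D) :=
  fun _ _ ⟨x, hx⟩ _ _ _ => ⟨x, hx, bot_le⟩

section JoinsOf

variable {D : Type*} [PartialOrder D] {A B : Set D}

def joinsOf (A B : Set D) : Set D :=
  {s | ∃ a ∈ A, ∃ b ∈ B, IsLUB {a, b} s}

lemma IsLUB.pair_le {a b s t : D} (hs : IsLUB {a, b} s) (hat : a ≤ t) (hbt : b ≤ t) : s ≤ t :=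
  hs.2 (by simp [upperBounds_insert, hat, hbt])

lemma le_of_isLUB_pair_left {a b s : D} (hs : IsLUB {a, b} s) : a ≤ s := hs.1 (by simp)

lemma le_of_isLUB_pair_right {a b s : D} (hs : IsLUB {a, b} s) : b ≤ s := hs.1 (by simp)

variable (hjoin : ∀ a ∈ A, ∀ b ∈ B, ∃ s, IsLUB {a, b} s)
include hjoin

lemma joinsOf_nonempty (hA : A.Nonempty) (hB : B.Nonempty) : (joinsOf A B).Nonempty := by
  obtain ⟨a, ha⟩ := hA
  obtain ⟨b, hb⟩ := hB
  obtain ⟨s, hs⟩ := hjoin a ha b hb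
  exact ⟨s, a, ha, b, hb, hs⟩

lemma directedOn_joinsOf (hA : DirectedOn (· ≤ ·) A) (hB : DirectedOn (· ≤ ·) B) :
    DirectedOn (· ≤ ·) (joinsOf A B) := by
  rintro s ⟨a, ha, b, hb, hs⟩ s' ⟨a', ha', b', hb', hs'⟩
  obtain ⟨a'', ha'', haa'', ha'a''⟩ := hA a ha a' ha'
  obtain ⟨b'', hb'', hbb'', hb'b''⟩ := hB b hb b' hb'
  obtain ⟨t, ht⟩ := hjoin a'' ha'' b'' hb''
  have hat := le_of_isLUB_pair_left ht
  have hbt := le_of_isLUB_pair_right ht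
  exact ⟨t, ⟨a'', ha'', b'', hb'', ht⟩, hs.pair_le (haa''.trans hat) (hbb''.trans hbt),
    hs'.pair_le (ha'a''.trans hat) (hb'b''.trans hbt)⟩

lemma isLUB_pair_of_isLUB_joinsOf {x y l : D} (hA : A.Nonempty) (hB : B.Nonempty)
    (hx : IsLUB A x) (hy : IsLUB B y) (hl : IsLUB (joinsOf A B) l) : IsLUB {x, y} l := by
  have hxl : x ≤ l := hx.2 fun a ha => by
    obtain ⟨b, hb⟩ := hB
    obtain ⟨s, hs⟩ := hjoin a ha b hb
    exact (le_of_isLUB_pair_left hs).trans (hl.1 ⟨a, ha, b, hb, hs⟩)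
  have hyl : y ≤ l := hy.2 fun b hb => by
    obtain ⟨a, ha⟩ := hA
    obtain ⟨s, hs⟩ := hjoin a ha b hb
    exact (le_of_isLUB_pair_right hs).trans (hl.1 ⟨a, ha, b, hb, hs⟩)
  refine ⟨by simp [upperBounds_insert, hxl, hyl], fun t ht => hl.2 ?_⟩
  rintro s ⟨a, ha, b, hb, hs⟩
  exact hs.pair_le ((hx.1 ha).trans (ht (by simp))) ((hy.1 hb).trans (ht (by simp)))

end JoinsOf

theorem bounded_complete_iff_finitely_bounded_complete_general {D : Type*} [PartialOrder D] [OrderBot D]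
    (hdcpo : ∀ X : Set D, X.Nonempty → DirectedOn (· ≤ ·) X → ∃ l, IsLUB X l)
    (halg : ∀ x : D, DirectedOn (· ≤ ·) {a | IsCompactElt a ∧ a ≤ x} ∧
      IsLUB {a | IsCompactElt a ∧ a ≤ x} x) :
    (∀ x y : D, (∃ u, x ≤ u ∧ y ≤ u) → ∃ s, IsLUB {x, y} s) ↔
    (∀ x y : D, IsCompactElt x → IsCompactElt y → (∃ u, x ≤ u ∧ y ≤ u) →
      ∃ s, IsLUB {x, y} s) := by
  refine ⟨fun h x y _ _ => h x y, fun hfin x y ⟨u, hxu, hyu⟩ => ?_⟩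
  have hne : ∀ z : D, {a | IsCompactElt a ∧ a ≤ z}.Nonempty :=
    fun _ => ⟨⊥, bot_isCompactElt, bot_le⟩
  have hjoin : ∀ a ∈ {a | IsCompactElt a ∧ a ≤ x}, ∀ b ∈ {b | IsCompactElt b ∧ b ≤ y},
      ∃ s, IsLUB {a, b} s :=
    fun a ha b hb => hfin a b ha.1 hb.1 ⟨u, ha.2.trans hxu, hb.2.trans hyu⟩
  obtain ⟨l, hl⟩ := hdcpo _ (joinsOf_nonempty hjoin (hne x) (hne y))
    (directedOn_joinsOf hjoin (halg x).1 (halg y).1)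
  exact ⟨l, isLUB_pair_of_isLUB_joinsOf hjoin (hne x) (hne y) (halg x).2 (halg y).2 hl⟩

/-- In an ω-algebraic dcpo, bounded completeness is equivalent to finite bounded
completeness. -/
theorem bounded_complete_iff_finitely_bounded_complete {D : Type*} [PartialOrder D] [OrderBot D]
    (hdcpo : ∀ X : Set D, X.Nonempty → DirectedOn (· ≤ ·) X → ∃ l, IsLUB X l)
    (hcount : {a : D | IsCompactElt a}.Countable)
    (halg : ∀ x : D, DirectedOn (· ≤ ·) {a | IsCompactElt a ∧ a ≤ x} ∧
      IsLUB {a | IsCompactElt a ∧ a ≤ x} x) :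
    (∀ x y : D, (∃ u, x ≤ u ∧ y ≤ u) → ∃ s, IsLUB {x, y} s) ↔
    (∀ x y : D, IsCompactElt x → IsCompactElt y → (∃ u, x ≤ u ∧ y ≤ u) →
      ∃ s, IsLUB {x, y} s) :=
  bounded_complete_iff_finitely_bounded_complete_general hdcpo halg
end

section
/- If a poset P with least element is bounded complete on its elements (any two upper-bounded elements have a least upper bound), then its ideal completion Idl(P) is bounded complete: any two ideals with a common upper-bound ideal have a least upper bound in Idl(P). -/
def IsIdeal {P : Type*} [PartialOrder P] (I : Set P) : Prop :=
  I.Nonempty ∧ DirectedOn (· ≤ ·) I ∧ ∀ a b, a ≤ b → b ∈ I → a ∈ I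

/-!
Since `K` is directed, any `a ∈ I`, `b ∈ J` have an upper bound in `K`, hence a join `a ⊔ b`.
The down-set generated by these joins is directed because `I` and `J` are (joins are monotone in
both arguments), it contains `I` and `J`, and any ideal containing `I` and `J` contains an upper
bound of `a` and `b`, hence `a ⊔ b` and everything below.
-/

open Set

section PairLUB

variable {P : Type*} [Preorder P] {a b a' b' s s' u : P}

theorem IsLUB.left_le_of_pair (h : IsLUB {a, b} s) : a ≤ s :=
  h.1 (mem_insert _ _)

theorem IsLUB.right_le_of_pair (h : IsLUB {a, b} s) : b ≤ s :=
  h.1 (mem_insert_of_mem _ rfl)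

theorem IsLUB.le_of_pair (h : IsLUB {a, b} s) (ha : a ≤ u) (hb : b ≤ u) : s ≤ u :=
  h.2 (forall_insert_of_forall (forall_eq.mpr hb) ha)

theorem IsLUB.mono_pair (h : IsLUB {a, b} s) (h' : IsLUB {a', b'} s') (ha : a ≤ a')
    (hb : b ≤ b') : s ≤ s' :=
  h.le_of_pair (ha.trans h'.left_le_of_pair) (hb.trans h'.right_le_of_pair)

end PairLUB

section IdealSup

variable {P : Type*} [PartialOrder P] {I J K : Set P}

def idealSup (I J : Set P) : Set P :=
  {x | ∃ a ∈ I, ∃ b ∈ J, ∃ s, IsLUB {a, b} s ∧ x ≤ s}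

theorem exists_isLUB_pair_of_subset_ideal
    (hbc : ∀ a b : P, (∃ u, a ≤ u ∧ b ≤ u) → ∃ s, IsLUB {a, b} s) (hK : IsIdeal K)
    (hIK : I ⊆ K) (hJK : J ⊆ K) : ∀ a ∈ I, ∀ b ∈ J, ∃ s, IsLUB {a, b} s := by
  intro a ha b hb
  obtain ⟨u, -, hau, hbu⟩ := hK.2.1 a (hIK ha) b (hJK hb)
  exact hbc a b ⟨u, hau, hbu⟩

section PairwiseLUB

variable (hlub : ∀ a ∈ I, ∀ b ∈ J, ∃ s, IsLUB {a, b} s)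
include hlub

theorem subset_idealSup_left (hJ : J.Nonempty) : I ⊆ idealSup I J := by
  intro a ha
  obtain ⟨b, hb⟩ := hJ
  obtain ⟨s, hs⟩ := hlub a ha b hb
  exact ⟨a, ha, b, hb, s, hs, hs.left_le_of_pair⟩

theorem subset_idealSup_right (hI : I.Nonempty) : J ⊆ idealSup I J := by
  intro b hb
  obtain ⟨a, ha⟩ := hI
  obtain ⟨s, hs⟩ := hlub a ha b hb
  exact ⟨a, ha, b, hb, s, hs, hs.right_le_of_pair⟩

theorem directedOn_idealSup (hI : DirectedOn (· ≤ ·) I) (hJ : DirectedOn (· ≤ ·) J) :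
    DirectedOn (· ≤ ·) (idealSup I J) := by
  rintro x ⟨a, ha, b, hb, s, hs, hxs⟩ y ⟨a', ha', b', hb', s', hs', hys'⟩
  obtain ⟨a'', ha'', haa'', ha'a''⟩ := hI a ha a' ha'
  obtain ⟨b'', hb'', hbb'', hb'b''⟩ := hJ b hb b' hb'
  obtain ⟨s'', hs''⟩ := hlub a'' ha'' b'' hb''
  exact ⟨s'', ⟨a'', ha'', b'', hb'', s'', hs'', le_rfl⟩,
    hxs.trans (hs.mono_pair hs'' haa'' hbb''), hys'.trans (hs'.mono_pair hs'' ha'a'' hb'b'')⟩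

theorem isIdeal_idealSup (hI : IsIdeal I) (hJ : IsIdeal J) : IsIdeal (idealSup I J) :=
  ⟨hI.1.mono (subset_idealSup_left hlub hJ.1), directedOn_idealSup hlub hI.2.1 hJ.2.1,
    fun _ _ hxy ⟨a, ha, b, hb, s, hs, hys⟩ => ⟨a, ha, b, hb, s, hs, hxy.trans hys⟩⟩

end PairwiseLUB

theorem idealSup_subset (hK : IsIdeal K) (hIK : I ⊆ K) (hJK : J ⊆ K) : idealSup I J ⊆ K := by
  rintro x ⟨a, ha, b, hb, s, hs, hxs⟩
  obtain ⟨u, hu, hau, hbu⟩ := hK.2.1 a (hIK ha) b (hJK hb)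
  exact hK.2.2 x u (hxs.trans (hs.le_of_pair hau hbu)) hu

end IdealSup

theorem ideal_completion_bounded_complete_general {P : Type*} [PartialOrder P]
    (hbc : ∀ a b : P, (∃ u, a ≤ u ∧ b ≤ u) → ∃ s, IsLUB {a, b} s)
    (I J K : Set P) (hI : IsIdeal I) (hJ : IsIdeal J) (hK : IsIdeal K)
    (hIK : I ⊆ K) (hJK : J ⊆ K) :
    IsIdeal {x : P | ∃ a ∈ I, ∃ b ∈ J, ∃ s, IsLUB {a, b} s ∧ x ≤ s} ∧
    I ⊆ {x : P | ∃ a ∈ I, ∃ b ∈ J, ∃ s, IsLUB {a, b} s ∧ x ≤ s} ∧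
    J ⊆ {x : P | ∃ a ∈ I, ∃ b ∈ J, ∃ s, IsLUB {a, b} s ∧ x ≤ s} ∧
    (∀ K' : Set P, IsIdeal K' → I ⊆ K' → J ⊆ K' →
      {x : P | ∃ a ∈ I, ∃ b ∈ J, ∃ s, IsLUB {a, b} s ∧ x ≤ s} ⊆ K') := by
  have hlub := exists_isLUB_pair_of_subset_ideal hbc hK hIK hJK
  exact ⟨isIdeal_idealSup hlub hI hJ, subset_idealSup_left hlub hJ.1,
    subset_idealSup_right hlub hI.1, fun _ hK' => idealSup_subset hK'⟩

/-- If `P` is bounded complete then its ideal completion is bounded complete: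
two ideals with a common upper-bound ideal have a least upper bound, namely the
downward closure of the joins `a ⊔ b` for `a ∈ I`, `b ∈ J`. -/
theorem ideal_completion_bounded_complete {P : Type*} [PartialOrder P] [OrderBot P]
    (hbc : ∀ a b : P, (∃ u, a ≤ u ∧ b ≤ u) → ∃ s, IsLUB {a, b} s)
    (I J K : Set P) (hI : IsIdeal I) (hJ : IsIdeal J) (hK : IsIdeal K)
    (hIK : I ⊆ K) (hJK : J ⊆ K) :
    IsIdeal {x : P | ∃ a ∈ I, ∃ b ∈ J, ∃ s, IsLUB {a, b} s ∧ x ≤ s} ∧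
    I ⊆ {x : P | ∃ a ∈ I, ∃ b ∈ J, ∃ s, IsLUB {a, b} s ∧ x ≤ s} ∧
    J ⊆ {x : P | ∃ a ∈ I, ∃ b ∈ J, ∃ s, IsLUB {a, b} s ∧ x ≤ s} ∧
    (∀ K' : Set P, IsIdeal K' → I ⊆ K' → J ⊆ K' →
      {x : P | ∃ a ∈ I, ∃ b ∈ J, ∃ s, IsLUB {a, b} s ∧ x ≤ s} ⊆ K') :=
  ideal_completion_bounded_complete_general hbc I J K hI hJ hK hIK hJK
end
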